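/- arXiv:0908.2122 — 2 statements merged into one kernel-verified Lean document; each statement's English description precedes it below -/
import Mathlib

section
/- Let G be a loopless graph with n vertices and κ connected components, and let λ be a real number with λ < 0. Then P_G(λ) ≠ 0 and the sign of P_G(λ) is (−1)^n. -/
/-!
Deletion–contraction is cleanest for multigraphs, since contracting an edge may create loops and
parallel edges. In the Whitney expansion, adding a link `uv` subtracts the polynomial of the
multigraph with `v` merged into `u`, which has one vertex fewer, while adding a loop makes the
polynomial vanish. So for `λ < 0`, `(-1)^n P(λ)` is a sum of two terms of the same kind, and
induction on the number of edges, starting from `(-1)^n λ^n > 0` for the edgeless graph, shows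
that it is `≥ 0` always and `> 0` in the absence of loops.
-/
/-- The (real-valued) chromatic polynomial of a simple graph `G` (Whitney rank expansion). -/
noncomputable def chromPolyR {V : Type*} [Fintype V] (G : SimpleGraph V) (x : ℝ) : ℝ :=
  ∑ A ∈ (Set.toFinite G.edgeSet).toFinset.powerset,
    (-1 : ℝ) ^ A.card *
      x ^ Nat.card (SimpleGraph.fromEdgeSet (↑A : Set (Sym2 V))).ConnectedComponent

open Finset SimpleGraph

namespace SimpleGraph

variable {V W : Type*}

lemma card_connectedComponent_bot :
    Nat.card (⊥ : SimpleGraph V).ConnectedComponent = Nat.card V :=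
  (Nat.card_eq_of_bijective _
    ⟨fun _ _ h => reachable_bot.mp (ConnectedComponent.exact h), Quot.mk_surjective⟩).symm

lemma card_connectedComponent_eq_of_reachable_iff {G : SimpleGraph V} {H : SimpleGraph W}
    (f : V → W) (hf : Function.Surjective f)
    (h : ∀ x y, G.Reachable x y ↔ H.Reachable (f x) (f y)) :
    Nat.card G.ConnectedComponent = Nat.card H.ConnectedComponent := by
  refine Nat.card_eq_of_bijective
    (ConnectedComponent.lift (fun x => H.connectedComponentMk (f x))
      fun x y p _ => ConnectedComponent.sound ((h x y).mp p.reachable)) ⟨?_, ?_⟩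
  · exact ConnectedComponent.ind₂ fun x y hxy =>
      ConnectedComponent.sound ((h x y).mpr (ConnectedComponent.exact hxy))
  · refine ConnectedComponent.ind fun w => ?_
    obtain ⟨x, rfl⟩ := hf w
    exact ⟨G.connectedComponentMk x, rfl⟩

lemma Reachable.map_of_adj_reachable {G : SimpleGraph V} {H : SimpleGraph W} (f : V → W)
    (h : ∀ a b, G.Adj a b → H.Reachable (f a) (f b)) {x y : V} (hxy : G.Reachable x y) :
    H.Reachable (f x) (f y) := by
  obtain ⟨p⟩ := hxy
  induction p with
  | nil => rfl
  | cons hadj _ ih => exact (h _ _ hadj).trans ih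

lemma reachable_fromEdgeSet_of_mem {s : Set (Sym2 V)} {a b : V} (h : s(a, b) ∈ s) :
    (fromEdgeSet s).Reachable a b := by
  by_cases hab : a = b
  · rw [hab]
  · exact ((fromEdgeSet_adj _).mpr ⟨h, hab⟩).reachable

lemma fromEdgeSet_insert_of_isDiag {s : Set (Sym2 V)} {e : Sym2 V} (he : e.IsDiag) :
    fromEdgeSet (insert e s) = fromEdgeSet s := by
  ext a b
  simp only [fromEdgeSet_adj, Set.mem_insert_iff]
  constructor
  · rintro ⟨rfl | h, hab⟩
    · exact absurd (Sym2.mk_isDiag_iff.mp he) hab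
    · exact ⟨h, hab⟩
  · exact fun ⟨h, hab⟩ => ⟨Or.inr h, hab⟩

section Contraction

variable [DecidableEq V] {u v : V}

def contractVertex (huv : u ≠ v) (x : V) : {w : V // w ≠ v} :=
  if hx : x = v then ⟨u, huv⟩ else ⟨x, hx⟩

lemma contractVertex_coe (huv : u ≠ v) (w : {w : V // w ≠ v}) : contractVertex huv w = w := by
  simp [contractVertex, w.2]

lemma contractVertex_left_eq_right (huv : u ≠ v) :
    contractVertex huv u = contractVertex huv v := by
  simp [contractVertex, huv]

lemma contractVertex_surjective (huv : u ≠ v) : Function.Surjective (contractVertex huv) :=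
  fun w => ⟨w, contractVertex_coe huv w⟩

lemma reachable_contractVertex (huv : u ≠ v) (s : Set (Sym2 V)) (x : V) :
    (fromEdgeSet (insert s(u, v) s)).Reachable x (contractVertex huv x) := by
  by_cases hx : x = v
  · subst hx
    simpa [contractVertex] using (reachable_fromEdgeSet_of_mem (Set.mem_insert _ _)).symm
  · simp [contractVertex, hx]

lemma reachable_insert_iff_reachable_map_contractVertex (huv : u ≠ v) (s : Set (Sym2 V))
    (x y : V) :
    (fromEdgeSet (insert s(u, v) s)).Reachable x y ↔
      (fromEdgeSet (Sym2.map (contractVertex huv) '' s)).Reachable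
        (contractVertex huv x) (contractVertex huv y) := by
  constructor
  · refine Reachable.map_of_adj_reachable _ fun a b hab => ?_
    obtain ⟨hmem | hmem, -⟩ := (fromEdgeSet_adj _).mp hab
    · rcases Sym2.eq_iff.mp hmem with ⟨rfl, rfl⟩ | ⟨rfl, rfl⟩ <;>
        rw [contractVertex_left_eq_right]
    · exact reachable_fromEdgeSet_of_mem ⟨s(a, b), hmem, rfl⟩
  · intro h
    refine ((reachable_contractVertex huv s x).trans ?_).trans
      (reachable_contractVertex huv s y).symm
    refine Reachable.map_of_adj_reachable Subtype.val (fun a b hab => ?_) h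
    obtain ⟨⟨⟨p, q⟩, he, hab⟩, -⟩ := (fromEdgeSet_adj _).mp hab
    have hreach := ((reachable_contractVertex huv s p).symm.trans
      (reachable_fromEdgeSet_of_mem (Set.mem_insert_of_mem _ he))).trans
      (reachable_contractVertex huv s q)
    rcases Sym2.eq_iff.mp hab with ⟨rfl, rfl⟩ | ⟨rfl, rfl⟩
    · exact hreach
    · exact hreach.symm

lemma card_connectedComponent_fromEdgeSet_insert (huv : u ≠ v) (s : Set (Sym2 V)) :
    Nat.card (fromEdgeSet (insert s(u, v) s)).ConnectedComponent =
      Nat.card (fromEdgeSet (Sym2.map (contractVertex huv) '' s)).ConnectedComponent :=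
  card_connectedComponent_eq_of_reachable_iff _ (contractVertex_surjective huv)
    (reachable_insert_iff_reachable_map_contractVertex huv s)

end Contraction

end SimpleGraph

section Whitney

variable {ι V : Type*}

/-- Whitney's expansion of the chromatic polynomial of the multigraph on `V` with edge set `E`,
edge `i` having endpoints `ends i`; loops are allowed. -/
noncomputable def multiChromPoly (ends : ι → Sym2 V) (E : Finset ι) (x : ℝ) : ℝ :=
  ∑ A ∈ E.powerset, (-1 : ℝ) ^ #A * x ^ Nat.card (fromEdgeSet (ends '' A)).ConnectedComponent

namespace multiChromPoly

variable {ends : ι → Sym2 V} {E : Finset ι} {i : ι} {x : ℝ}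

lemma empty_eq : multiChromPoly ends ∅ x = x ^ Nat.card V := by
  simp [multiChromPoly, card_connectedComponent_bot]

lemma insert_eq [DecidableEq ι] (hi : i ∉ E) :
    multiChromPoly ends (insert i E) x = multiChromPoly ends E x -
      ∑ A ∈ E.powerset, (-1 : ℝ) ^ #A *
        x ^ Nat.card (fromEdgeSet (insert (ends i) (ends '' A))).ConnectedComponent := by
  rw [multiChromPoly, sum_powerset_insert hi, sub_eq_add_neg, ← sum_neg_distrib]
  congr 1
  refine sum_congr rfl fun A hA => ?_
  have hiA : i ∉ A := fun h => hi (mem_powerset.mp hA h)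
  rw [card_insert_of_notMem hiA, coe_insert, Set.image_insert_eq, pow_succ]
  ring

lemma insert_eq_zero_of_isDiag [DecidableEq ι] (hi : i ∉ E) (hloop : (ends i).IsDiag) :
    multiChromPoly ends (insert i E) x = 0 := by
  simp only [insert_eq hi, fromEdgeSet_insert_of_isDiag hloop]
  exact sub_self _

lemma insert_eq_sub_contract [DecidableEq ι] [DecidableEq V] {u v : V} (hi : i ∉ E)
    (huv : u ≠ v) (hends : ends i = s(u, v)) :
    multiChromPoly ends (insert i E) x =
      multiChromPoly ends E x - multiChromPoly (Sym2.map (contractVertex huv) ∘ ends) E x := by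
  rw [insert_eq hi, hends]
  simp only [card_connectedComponent_fromEdgeSet_insert huv, multiChromPoly, Set.image_comp]

variable [Fintype V]

lemma neg_one_pow_card_mul_insert [DecidableEq ι] [DecidableEq V] {u v : V} (hi : i ∉ E)
    (huv : u ≠ v) (hends : ends i = s(u, v)) :
    (-1) ^ Fintype.card V * multiChromPoly ends (insert i E) x =
      (-1) ^ Fintype.card V * multiChromPoly ends E x + (-1) ^ Fintype.card {w // w ≠ v} *
        multiChromPoly (Sym2.map (contractVertex huv) ∘ ends) E x := by
  have hcard : Fintype.card V = Fintype.card {w // w ≠ v} + 1 := by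
    have := Fintype.card_pos_iff.mpr ⟨v⟩
    rw [Fintype.card_subtype_compl, Fintype.card_subtype_eq]
    omega
  rw [insert_eq_sub_contract hi huv hends, hcard, pow_succ]
  ring

lemma neg_one_pow_card_mul_empty_pos (hx : x < 0) :
    0 < (-1) ^ Fintype.card V * multiChromPoly ends ∅ x := by
  rw [empty_eq, Nat.card_eq_fintype_card, ← mul_pow]
  exact pow_pos (by linarith) _

theorem neg_one_pow_card_mul_nonneg (hx : x < 0) :
    0 ≤ (-1) ^ Fintype.card V * multiChromPoly ends E x := by
  classical
  induction E using Finset.induction_on generalizing V with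
  | empty => exact (neg_one_pow_card_mul_empty_pos hx).le
  | insert i E hi ih =>
    obtain ⟨⟨u, v⟩, hends⟩ := Quot.exists_rep (ends i)
    by_cases huv : u = v
    · rw [insert_eq_zero_of_isDiag hi (by simp [← hends, huv]), mul_zero]
    · rw [neg_one_pow_card_mul_insert hi huv hends.symm]
      exact add_nonneg ih ih

theorem neg_one_pow_card_mul_pos (hx : x < 0) (hloopless : ∀ i ∈ E, ¬ (ends i).IsDiag) :
    0 < (-1) ^ Fintype.card V * multiChromPoly ends E x := by
  classical
  induction E using Finset.induction_on with
  | empty => exact neg_one_pow_card_mul_empty_pos hx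
  | insert i E hi ih =>
    obtain ⟨⟨u, v⟩, hends⟩ := Quot.exists_rep (ends i)
    have huv : u ≠ v := fun h => hloopless i (mem_insert_self i E) (by simp [← hends, h])
    rw [neg_one_pow_card_mul_insert hi huv hends.symm]
    exact add_pos_of_pos_of_nonneg (ih fun j hj => hloopless j (mem_insert_of_mem hj))
      (neg_one_pow_card_mul_nonneg hx)

end multiChromPoly

end Whitney

/-- Woodall–Jackson, part (i): for a loopless graph `G` on `n` vertices
and any real `λ < 0`, `P_G(λ) ≠ 0` and its sign is `(−1)^n`. -/
theorem stmt16 {V : Type*} [Fintype V] (G : SimpleGraph V)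
    (lam : ℝ) (hlam : lam < 0) :
    chromPolyR G lam ≠ 0 ∧
    0 < (-1 : ℝ) ^ (Fintype.card V) * chromPolyR G lam := by
  have hchrom : chromPolyR G lam = multiChromPoly id (Set.toFinite G.edgeSet).toFinset lam := by
    simp only [chromPolyR, multiChromPoly, Set.image_id]
  have hpos : 0 < (-1 : ℝ) ^ (Fintype.card V) * chromPolyR G lam := by
    rw [hchrom]
    refine multiChromPoly.neg_one_pow_card_mul_pos hlam fun e he => ?_
    exact G.not_isDiag_of_mem_edgeSet ((Set.Finite.mem_toFinset _).mp he)
  exact ⟨right_ne_zero_of_mul hpos.ne', hpos⟩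
end

section
/- Let k ≥ 3 and δ > 0, and choose a positive integer r with k − 1 − δ ≤ (k−1)^{1−1/r}. If |P̂ − P_H(k)| ≤ (1/2)·(k−1−δ)^{nr} and P_H(k) = P_G(k)·(k−1)^{n(r−1)}, then |P̂/(k−1)^{n(r−1)} − P_G(k)| ≤ 1/2; consequently, since P_G(k) is an integer, P_G(k) is the nearest integer to P̂/(k−1)^{n(r−1)}. -/
/-!
Raising `k - 1 - δ ≤ (k - 1)^(1 - 1/r)` to the power `n r` gives
`(k - 1 - δ)^(n r) ≤ (k - 1)^(n (r - 1))`, so after dividing by `(k - 1)^(n (r - 1))` the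
additive error is at most `1/2`. An integer within `1/2` of a real number is a nearest integer
to it, since any other integer is at distance at least `1` from it.
-/

lemma pow_mul_le_pow_mul_pred_of_le_rpow {K a : ℝ} {r : ℕ} (hK : 0 ≤ K) (ha : 0 ≤ a)
    (hr : 0 < r) (h : a ≤ K ^ (1 - 1 / (r : ℝ))) (n : ℕ) :
    a ^ (n * r) ≤ K ^ (n * (r - 1)) := by
  have hexp : (1 - 1 / (r : ℝ)) * r = ((r - 1 : ℕ) : ℝ) := by
    rw [Nat.cast_pred hr]
    field_simp
  have hpow : a ^ r ≤ K ^ (r - 1) :=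
    calc a ^ r ≤ (K ^ (1 - 1 / (r : ℝ))) ^ r := pow_le_pow_left₀ ha h r
      _ = K ^ (r - 1) := by rw [← Real.rpow_mul_natCast hK, hexp, Real.rpow_natCast]
  rw [mul_comm n, mul_comm n, pow_mul, pow_mul]
  exact pow_le_pow_left₀ (pow_nonneg ha r) hpow n

lemma abs_div_sub_le_of_abs_sub_mul_le {x c m ε : ℝ} (hm : 0 < m) (h : |x - c * m| ≤ ε * m) :
    |x / m - c| ≤ ε := by
  have hdiv : x / m - c = (x - c * m) / m := by field_simp
  rwa [hdiv, abs_div, abs_of_pos hm, div_le_iff₀ hm]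

lemma abs_sub_intCast_le_of_abs_sub_le_half {y : ℝ} {a : ℤ} (h : |y - a| ≤ 1 / 2) (z : ℤ) :
    |y - a| ≤ |y - z| := by
  rcases eq_or_ne z a with rfl | hza
  · rfl
  have hgap : (1 : ℝ) ≤ |(a : ℝ) - z| := by
    exact_mod_cast Int.one_le_abs (sub_ne_zero.mpr hza.symm)
  have htri : |(a : ℝ) - z| ≤ |y - a| + |y - z| := by
    simpa only [abs_sub_comm (a : ℝ) y] using abs_sub_le (a : ℝ) y z
  linarith

theorem stmt19_general (k : ℕ) (δ : ℝ) (hδ0 : 0 < δ) (hδk : δ < (k : ℝ) - 1)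
    (r : ℕ) (hr : 0 < r)
    (hrδ : (k : ℝ) - 1 - δ ≤ ((k : ℝ) - 1) ^ ((1 : ℝ) - 1 / (r : ℝ)))
    (n : ℕ) (Phat : ℝ) (PG PH : ℤ)
    (hPH : (PH : ℝ) = (PG : ℝ) * ((k : ℝ) - 1) ^ (n * (r - 1)))
    (happrox : |Phat - (PH : ℝ)| ≤ (1 / 2) * ((k : ℝ) - 1 - δ) ^ (n * r)) :
    |Phat / ((k : ℝ) - 1) ^ (n * (r - 1)) - (PG : ℝ)| ≤ 1 / 2 ∧
    ∀ z : ℤ, z ≠ PG →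
      |Phat / ((k : ℝ) - 1) ^ (n * (r - 1)) - (PG : ℝ)|
        ≤ |Phat / ((k : ℝ) - 1) ^ (n * (r - 1)) - (z : ℝ)| := by
  have hK : 0 < (k : ℝ) - 1 := hδ0.trans hδk
  have hkey : ((k : ℝ) - 1 - δ) ^ (n * r) ≤ ((k : ℝ) - 1) ^ (n * (r - 1)) :=
    pow_mul_le_pow_mul_pred_of_le_rpow hK.le (by linarith) hr hrδ n
  have hclose : |Phat / ((k : ℝ) - 1) ^ (n * (r - 1)) - (PG : ℝ)| ≤ 1 / 2 := by
    refine abs_div_sub_le_of_abs_sub_mul_le (by positivity) ?_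
    rw [← hPH]
    linarith
  exact ⟨hclose, fun z _ => abs_sub_intCast_le_of_abs_sub_le_half hclose z⟩

/-- let `k ≥ 3`, `0 < δ < k − 1`, and let `r ≥ 1` satisfy
`k − 1 − δ ≤ (k−1)^{1−1/r}`.  If `P̂` approximates `P_H(k)` to within
`(1/2)(k−1−δ)^{nr}` and `P_H(k) = P_G(k)(k−1)^{n(r−1)}`, then
`|P̂/(k−1)^{n(r−1)} − P_G(k)| ≤ 1/2`; consequently `P_G(k)` is a nearest integer to
`P̂/(k−1)^{n(r−1)}`. -/
theorem stmt19 (k : ℕ) (hk : 3 ≤ k) (δ : ℝ) (hδ0 : 0 < δ) (hδk : δ < (k : ℝ) - 1)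
    (r : ℕ) (hr : 0 < r)
    (hrδ : (k : ℝ) - 1 - δ ≤ ((k : ℝ) - 1) ^ ((1 : ℝ) - 1 / (r : ℝ)))
    (n : ℕ) (hn : 0 < n) (Phat : ℝ) (PG PH : ℤ)
    (hPH : (PH : ℝ) = (PG : ℝ) * ((k : ℝ) - 1) ^ (n * (r - 1)))
    (happrox : |Phat - (PH : ℝ)| ≤ (1 / 2) * ((k : ℝ) - 1 - δ) ^ (n * r)) :
    |Phat / ((k : ℝ) - 1) ^ (n * (r - 1)) - (PG : ℝ)| ≤ 1 / 2 ∧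
    ∀ z : ℤ, z ≠ PG →
      |Phat / ((k : ℝ) - 1) ^ (n * (r - 1)) - (PG : ℝ)|
        ≤ |Phat / ((k : ℝ) - 1) ^ (n * (r - 1)) - (z : ℝ)| :=
  stmt19_general k δ hδ0 hδk r hr hrδ n Phat PG PH hPH happrox
end
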